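/- arXiv:1604.08681 — 4 statements merged into one kernel-verified Lean document; each statement's English description precedes it below -/
import Mathlib

section
/- If D : A → X* is a continuous semi-inner derivation implemented by m, n ∈ X*, and X is a neo-unital Banach A-bimodule (X = A·X·A), then m = n, so D is inner. -/
open Filter Topology MeasureTheory

/-- A Banach bimodule structure over a (not necessarily unital) normed algebra `A`.
`l a x` is the left action `a • x` and `r a x` is the right action `x • a`. -/
structure BBimod (A X : Type*) [NonUnitalNormedRing A] [NormedSpace ℂ A]
    [NormedAddCommGroup X] [NormedSpace ℂ X] where
  l : A →L[ℂ] X →L[ℂ] X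
  r : A →L[ℂ] X →L[ℂ] X
  l_mul : ∀ a b x, l (a * b) x = l a (l b x)
  r_mul : ∀ a b x, r (a * b) x = r b (r a x)
  lr : ∀ a b x, l a (r b x) = r b (l a x)

namespace BBimod

variable {A X : Type*} [NonUnitalNormedRing A] [NormedSpace ℂ A]
    [NormedAddCommGroup X] [NormedSpace ℂ X]

/-- The dual bimodule structure on `X →L[ℂ] ℂ`:
`(a • f) x = f (x • a)` and `(f • a) x = f (a • x)`. -/
noncomputable def dual (M : BBimod A X) : BBimod A (X →L[ℂ] ℂ) where
  l := (ContinuousLinearMap.compL ℂ X X ℂ).flip.comp M.r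
  r := (ContinuousLinearMap.compL ℂ X X ℂ).flip.comp M.l
  l_mul := by intro a b f; ext x; simp [M.r_mul a b x]
  r_mul := by intro a b f; ext x; simp [M.l_mul a b x]
  lr := by intro a b f; ext x; simp [M.lr]

/-- `D` is a derivation: `D (a b) = a • D b + D a • b`. -/
def IsDeriv (M : BBimod A X) (D : A →L[ℂ] X) : Prop :=
  ∀ a b, D (a * b) = M.l a (D b) + M.r b (D a)

/-- `D` is inner: `D a = a • x - x • a` for some `x`. -/
def IsInner (M : BBimod A X) (D : A →L[ℂ] X) : Prop :=
  ∃ x, ∀ a, D a = M.l a x - M.r a x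

/-- `D` is approximately inner: a net of inner derivations converges to `D`
in the strong operator topology. -/
def IsApproxInner (M : BBimod A X) (D : A →L[ℂ] X) : Prop :=
  ∃ (ι : Type) (lf : Filter ι) (x : ι → X), lf.NeBot ∧
    ∀ a, Tendsto (fun i => M.l a (x i) - M.r a (x i)) lf (𝓝 (D a))

/-- `D` is boundedly approximately inner: the approximating net of inner derivations
is uniformly bounded in operator norm. -/
def IsBddApproxInner (M : BBimod A X) (D : A →L[ℂ] X) : Prop :=
  ∃ (ι : Type) (lf : Filter ι) (x : ι → X) (K : ℝ), lf.NeBot ∧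
    (∀ i a, ‖M.l a (x i) - M.r a (x i)‖ ≤ K * ‖a‖) ∧
    ∀ a, Tendsto (fun i => M.l a (x i) - M.r a (x i)) lf (𝓝 (D a))

/-- `D` is approximately semi-inner: `D a = lim_i (a • m i - n i • a)`. -/
def IsApproxSemiInner (M : BBimod A X) (D : A →L[ℂ] X) : Prop :=
  ∃ (ι : Type) (lf : Filter ι) (m n : ι → X), lf.NeBot ∧
    ∀ a, Tendsto (fun i => M.l a (m i) - M.r a (n i)) lf (𝓝 (D a))

/-- The bimodule `X` is neo-unital: `X = A • X • A`. -/
def NeoUnital (M : BBimod A X) : Prop :=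
  ∀ x : X, ∃ a b y, x = M.l a (M.r b y)

/-- A derivation into the dual module is boundedly weak*-approximately inner. -/
def IsBddWeakStarApproxInner (M : BBimod A X) (D : A →L[ℂ] (X →L[ℂ] ℂ)) : Prop :=
  ∃ (ι : Type) (lf : Filter ι) (f : ι → (X →L[ℂ] ℂ)) (K : ℝ), lf.NeBot ∧
    (∀ i, ‖f i‖ ≤ K) ∧
    ∀ (a : A) (x : X),
      Tendsto (fun i => (M.dual.l a (f i) - M.dual.r a (f i)) x) lf (𝓝 (D a x))

end BBimod

/-- A Banach algebra is approximately amenable if every continuous derivation into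
the dual of a Banach bimodule is approximately inner. -/
def ApproxAmenable (A : Type*) [NonUnitalNormedRing A] [NormedSpace ℂ A] : Prop :=
  ∀ (X : Type) [NormedAddCommGroup X] [NormedSpace ℂ X] [CompleteSpace X]
    (M : BBimod A X) (D : A →L[ℂ] (X →L[ℂ] ℂ)),
    M.dual.IsDeriv D → M.dual.IsApproxInner D

/-- A Banach algebra is boundedly approximately amenable if every continuous derivation
into the dual of a Banach bimodule is boundedly approximately inner. -/
def BddApproxAmenable (A : Type*) [NonUnitalNormedRing A] [NormedSpace ℂ A] : Prop :=
  ∀ (X : Type) [NormedAddCommGroup X] [NormedSpace ℂ X] [CompleteSpace X]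
    (M : BBimod A X) (D : A →L[ℂ] (X →L[ℂ] ℂ)),
    M.dual.IsDeriv D → M.dual.IsBddApproxInner D

/-- A Banach algebra is boundedly approximately contractible if every continuous
derivation into any Banach bimodule is boundedly approximately inner. -/
def BddApproxContractible (A : Type*) [NonUnitalNormedRing A] [NormedSpace ℂ A] : Prop :=
  ∀ (X : Type) [NormedAddCommGroup X] [NormedSpace ℂ X] [CompleteSpace X]
    (M : BBimod A X) (D : A →L[ℂ] X),
    M.IsDeriv D → M.IsBddApproxInner D

/-- A Banach algebra is amenable if every continuous derivation into the dual of a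
Banach bimodule is inner. -/
def Amenable (A : Type*) [NonUnitalNormedRing A] [NormedSpace ℂ A] : Prop :=
  ∀ (X : Type) [NormedAddCommGroup X] [NormedSpace ℂ X] [CompleteSpace X]
    (M : BBimod A X) (D : A →L[ℂ] (X →L[ℂ] ℂ)),
    M.dual.IsDeriv D → M.dual.IsInner D

/-- `A` has a bounded (two-sided) approximate identity. -/
def HasBAI (A : Type*) [NonUnitalNormedRing A] : Prop :=
  ∃ (ι : Type) (lf : Filter ι) (e : ι → A) (K : ℝ), lf.NeBot ∧
    (∀ i, ‖e i‖ ≤ K) ∧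
    ∀ a : A, Tendsto (fun i => e i * a) lf (𝓝 a) ∧ Tendsto (fun i => a * e i) lf (𝓝 a)

/-- A witness that the Banach algebra `C` is (isometrically isomorphic to) the projective
tensor product `A ⊗̂ B`: a contractive bilinear multiplicative map with dense span satisfying
the universal property of the projective tensor norm. -/
structure ProjTensor (A B C : Type*) [NonUnitalNormedRing A] [NormedSpace ℂ A]
    [NonUnitalNormedRing B] [NormedSpace ℂ B]
    [NonUnitalNormedRing C] [NormedSpace ℂ C] where
  tp : A →L[ℂ] B →L[ℂ] C
  mk_mul : ∀ a a' b b', tp (a * a') (b * b') = tp a b * tp a' b'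
  norm_mk_le : ∀ a b, ‖tp a b‖ ≤ ‖a‖ * ‖b‖
  dense_span : Dense
    ((Submodule.span ℂ (Set.range fun p : A × B => tp p.1 p.2) : Submodule ℂ C) : Set C)
  lift : ∀ (E : Type) [NormedAddCommGroup E] [NormedSpace ℂ E] [CompleteSpace E]
    (φ : A →L[ℂ] B →L[ℂ] E), ∃ T : C →L[ℂ] E, ‖T‖ ≤ ‖φ‖ ∧ ∀ a b, T (tp a b) = φ a b

/-- A witness that the Banach space `T` is the projective tensor product `E ⊗̂ F`
of Banach spaces. -/
structure ProjTensorSp (E F T : Type*) [NormedAddCommGroup E] [NormedSpace ℂ E]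
    [NormedAddCommGroup F] [NormedSpace ℂ F]
    [NormedAddCommGroup T] [NormedSpace ℂ T] where
  tp : E →L[ℂ] F →L[ℂ] T
  norm_mk_le : ∀ e f, ‖tp e f‖ ≤ ‖e‖ * ‖f‖
  dense_span : Dense
    ((Submodule.span ℂ (Set.range fun p : E × F => tp p.1 p.2) : Submodule ℂ T) : Set T)
  lift : ∀ (W : Type) [NormedAddCommGroup W] [NormedSpace ℂ W] [CompleteSpace W]
    (φ : E →L[ℂ] F →L[ℂ] W), ∃ S : T →L[ℂ] W, ‖S‖ ≤ ‖φ‖ ∧ ∀ e f, S (tp e f) = φ e f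

/-- A witness that the unital Banach algebra `A'` is the unitization `A#` of `A`. -/
structure IsUnitization (A A' : Type*) [NonUnitalNormedRing A] [NormedSpace ℂ A]
    [NormedRing A'] [NormedAlgebra ℂ A'] where
  ι : A →L[ℂ] A'
  ι_mul : ∀ a b, ι (a * b) = ι a * ι b
  ι_norm : ∀ a, ‖ι a‖ = ‖a‖
  decomp : ∀ x : A', ∃! p : ℂ × A, x = algebraMap ℂ A' p.1 + ι p.2

/-! Expanding the Leibniz rule for `D a = a • m - n • a` leaves exactly `a • (m - n) • b = 0`.
Evaluated at `x ∈ X`, this says `m - n` vanishes on `b • x • a`, and such elements exhaust a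
neo-unital `X`. -/

namespace BBimod

variable {A : Type*} [NonUnitalNormedRing A] [NormedSpace ℂ A]

theorem IsDeriv.l_r_sub_eq_zero {Y : Type*} [NormedAddCommGroup Y] [NormedSpace ℂ Y]
    {M : BBimod A Y} {D : A →L[ℂ] Y} (hD : M.IsDeriv D) {m n : Y}
    (hsemi : ∀ a, D a = M.l a m - M.r a n) (a b : A) :
    M.l a (M.r b (m - n)) = 0 := by
  have h := hD a b
  simp only [hsemi, map_sub, M.l_mul, M.r_mul, ← M.lr] at h
  rw [map_sub, map_sub]
  linear_combination (norm := module) -h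

variable {X : Type*} [NormedAddCommGroup X] [NormedSpace ℂ X]

theorem NeoUnital.eq_zero_of_dual_l_r_eq_zero {M : BBimod A X} (hneo : M.NeoUnital)
    {f : X →L[ℂ] ℂ} (hf : ∀ a b, M.dual.l a (M.dual.r b f) = 0) : f = 0 := by
  ext x
  obtain ⟨a, b, y, rfl⟩ := hneo x
  exact congrArg (fun g : X →L[ℂ] ℂ => g y) (hf b a)

end BBimod

theorem semi_inner_into_dual_of_neoUnital_eq_general
    {A X : Type*} [NonUnitalNormedRing A] [NormedSpace ℂ A]
    [NormedAddCommGroup X] [NormedSpace ℂ X]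
    (M : BBimod A X) (hneo : M.NeoUnital)
    (D : A →L[ℂ] (X →L[ℂ] ℂ)) (hD : M.dual.IsDeriv D)
    (m n : X →L[ℂ] ℂ)
    (hsemi : ∀ a, D a = M.dual.l a m - M.dual.r a n) :
    m = n ∧ M.dual.IsInner D := by
  have hmn : m = n := sub_eq_zero.mp <|
    hneo.eq_zero_of_dual_l_r_eq_zero (hD.l_r_sub_eq_zero hsemi)
  exact ⟨hmn, m, fun a => by rw [hsemi a, hmn]⟩

/-- a continuous semi-inner derivation `D : A → X*` implemented by
`m, n ∈ X*` into the dual of a neo-unital Banach bimodule satisfies `m = n`,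
so `D` is inner. -/
theorem semi_inner_into_dual_of_neoUnital_eq
    {A X : Type*} [NonUnitalNormedRing A] [NormedSpace ℂ A] [CompleteSpace A]
    [NormedAddCommGroup X] [NormedSpace ℂ X] [CompleteSpace X]
    (M : BBimod A X) (hneo : M.NeoUnital)
    (D : A →L[ℂ] (X →L[ℂ] ℂ)) (hD : M.dual.IsDeriv D)
    (m n : X →L[ℂ] ℂ)
    (hsemi : ∀ a, D a = M.dual.l a m - M.dual.r a n) :
    m = n ∧ M.dual.IsInner D :=
  semi_inner_into_dual_of_neoUnital_eq_general M hneo D hD m n hsemi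
end

section
/- If D : A → X is a continuous approximately semi-inner derivation, witnessed by nets (m_i), (n_i) with D(a) = lim_i (a·m_i − n_i·a), then lim_i a₁·(m_i − n_i)·a₂ = 0 for all a₁, a₂ ∈ A. -/
open Filter Topology MeasureTheory

namespace BBimod

variable {A X : Type*} [NonUnitalNormedRing A] [NormedSpace ℂ A]
    [NormedAddCommGroup X] [NormedSpace ℂ X] (M : BBimod A X)

noncomputable def semiInner (m n : X) (a : A) : X := M.l a m - M.r a n

theorem l_r_sub_eq_semiInner_mul (m n : X) (a b : A) :
    M.l a (M.r b (m - n)) =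
      M.l a (M.semiInner m n b) + M.r b (M.semiInner m n a) - M.semiInner m n (a * b) := by
  simp only [semiInner, map_sub, M.l_mul, M.r_mul, M.lr]
  abel

theorem IsDeriv.tendsto_leibniz_defect {M : BBimod A X} {D : A →L[ℂ] X} (hD : M.IsDeriv D)
    {ι : Type*} {lf : Filter ι} {δ : ι → A → X}
    (hδ : ∀ a, Tendsto (fun i => δ i a) lf (𝓝 (D a))) (a b : A) :
    Tendsto (fun i => M.l a (δ i b) + M.r b (δ i a) - δ i (a * b)) lf (𝓝 0) := by
  have hlim : M.l a (D b) + M.r b (D a) - D (a * b) = 0 := by rw [hD a b, sub_self]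
  rw [← hlim]
  exact (((M.l a).continuous.tendsto _).comp (hδ b)).add
    (((M.r b).continuous.tendsto _).comp (hδ a)) |>.sub (hδ (a * b))

end BBimod

theorem approx_semi_inner_sandwich_tendsto_zero_general
    {A X : Type*} [NonUnitalNormedRing A] [NormedSpace ℂ A]
    [NormedAddCommGroup X] [NormedSpace ℂ X]
    (M : BBimod A X) (D : A →L[ℂ] X) (hD : M.IsDeriv D)
    (ι : Type*) (lf : Filter ι) (m n : ι → X)
    (happrox : ∀ a, Tendsto (fun i => M.l a (m i) - M.r a (n i)) lf (𝓝 (D a))) :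
    ∀ a₁ a₂ : A, Tendsto (fun i => M.l a₁ (M.r a₂ (m i - n i))) lf (𝓝 0) := by
  intro a₁ a₂
  simpa only [← BBimod.l_r_sub_eq_semiInner_mul] using
    hD.tendsto_leibniz_defect (δ := fun i => M.semiInner (m i) (n i)) happrox a₁ a₂

/-- if the continuous derivation `D` is approximately semi-inner,
witnessed by nets `(m i)`, `(n i)`, then `lim_i a₁ • (m i - n i) • a₂ = 0`. -/
theorem approx_semi_inner_sandwich_tendsto_zero
    {A X : Type*} [NonUnitalNormedRing A] [NormedSpace ℂ A] [CompleteSpace A]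
    [NormedAddCommGroup X] [NormedSpace ℂ X] [CompleteSpace X]
    (M : BBimod A X) (D : A →L[ℂ] X) (hD : M.IsDeriv D)
    (ι : Type*) (lf : Filter ι) [lf.NeBot] (m n : ι → X)
    (happrox : ∀ a, Tendsto (fun i => M.l a (m i) - M.r a (n i)) lf (𝓝 (D a))) :
    ∀ a₁ a₂ : A, Tendsto (fun i => M.l a₁ (M.r a₂ (m i - n i))) lf (𝓝 0) :=
  approx_semi_inner_sandwich_tendsto_zero_general M D hD ι lf m n happrox
end

section
/- If A# ⊗̂ B# is approximately amenable, then B is approximately amenable. -/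
open Filter Topology MeasureTheory

/-!
The canonical character `φ` of `A#` (the one killing `A`) makes `a ⊗ b ↦ φ a • b` an epimorphism
of `A# ⊗̂ B#` onto `B#`. A Banach `B`-bimodule `X` with a derivation `D : B → X*` extends to `B#`
(the adjoined unit acts as the identity, `D 1 = 0`) and then, through that epimorphism, to
`A# ⊗̂ B#`. Approximate innerness of the extended derivation at `e ⊗ b`, where `φ e = 1`, is
approximate innerness of `D` at `b`.
-/

open ContinuousLinearMap WeakDual

lemma WeakDual.CharacterSpace.exists_apply_eq_one {A : Type*} [NonUnitalNormedRing A]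
    [NormedSpace ℂ A] (φ : characterSpace ℂ A) : ∃ e, φ e = 1 := by
  obtain ⟨x, hx⟩ : ∃ x, φ x ≠ 0 := by
    by_contra! h
    exact φ.prop.1 (ContinuousLinearMap.ext h)
  exact ⟨(φ x)⁻¹ • x, by simp [hx]⟩

namespace IsUnitization

variable {A A' : Type*} [NonUnitalNormedRing A] [NormedSpace ℂ A]
    [NormedRing A'] [NormedAlgebra ℂ A'] (u : IsUnitization A A')

noncomputable def equiv : (ℂ × A) ≃ₗ[ℂ] A' :=
  LinearEquiv.ofBijective
    ((Algebra.linearMap ℂ A').comp (LinearMap.fst ℂ ℂ A)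
      + u.ι.toLinearMap.comp (LinearMap.snd ℂ ℂ A))
    ⟨fun p _ h => (u.decomp (algebraMap ℂ A' p.1 + u.ι p.2)).unique rfl h,
      fun y => (u.decomp y).exists.imp fun _ hp => hp.symm⟩

noncomputable def fst : A' →ₗ[ℂ] ℂ := LinearMap.fst ℂ ℂ A ∘ₗ u.equiv.symm.toLinearMap

noncomputable def snd : A' →ₗ[ℂ] A := LinearMap.snd ℂ ℂ A ∘ₗ u.equiv.symm.toLinearMap

lemma algebraMap_fst_add_ι_snd (y : A') : algebraMap ℂ A' (u.fst y) + u.ι (u.snd y) = y :=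
  u.equiv.apply_symm_apply y

lemma fst_algebraMap_add_ι (z : ℂ) (a : A) : u.fst (algebraMap ℂ A' z + u.ι a) = z :=
  congrArg Prod.fst (u.equiv.symm_apply_apply (z, a))

lemma snd_algebraMap_add_ι (z : ℂ) (a : A) : u.snd (algebraMap ℂ A' z + u.ι a) = a :=
  congrArg Prod.snd (u.equiv.symm_apply_apply (z, a))

lemma fst_ι (a : A) : u.fst (u.ι a) = 0 := by
  simpa using u.fst_algebraMap_add_ι 0 a

lemma snd_ι (a : A) : u.snd (u.ι a) = a := by
  simpa using u.snd_algebraMap_add_ι 0 a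

lemma fst_one : u.fst 1 = 1 := by
  simpa using u.fst_algebraMap_add_ι 1 0

lemma algebraMap_add_ι_mul (z z' : ℂ) (a a' : A) :
    (algebraMap ℂ A' z + u.ι a) * (algebraMap ℂ A' z' + u.ι a')
      = algebraMap ℂ A' (z * z') + u.ι (z • a' + z' • a + a * a') := by
  simp only [add_mul, mul_add, map_add, map_smul, ← u.ι_mul, map_mul, Algebra.smul_def,
    Algebra.commutes z']
  abel

lemma fst_mul (y y' : A') : u.fst (y * y') = u.fst y * u.fst y' := by
  rw [← u.algebraMap_fst_add_ι_snd y, ← u.algebraMap_fst_add_ι_snd y', algebraMap_add_ι_mul,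
    fst_algebraMap_add_ι, fst_algebraMap_add_ι, fst_algebraMap_add_ι]

lemma snd_mul (y y' : A') :
    u.snd (y * y') = u.fst y • u.snd y' + u.fst y' • u.snd y + u.snd y * u.snd y' := by
  conv_lhs => rw [← u.algebraMap_fst_add_ι_snd y, ← u.algebraMap_fst_add_ι_snd y',
    algebraMap_add_ι_mul, snd_algebraMap_add_ι]

lemma ker_fst : LinearMap.ker u.fst = LinearMap.range u.ι.toLinearMap := by
  ext y
  refine ⟨fun hy => ⟨u.snd y, ?_⟩, ?_⟩
  · simpa [LinearMap.mem_ker.mp hy] using u.algebraMap_fst_add_ι_snd y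
  · rintro ⟨a, rfl⟩
    exact u.fst_ι a

variable [CompleteSpace A]

lemma continuous_fst : Continuous u.fst := by
  refine u.fst.continuous_of_isClosed_ker ?_
  rw [ker_fst]
  exact (AddMonoidHomClass.isometry_of_norm u.ι u.ι_norm).isClosedEmbedding.isClosed_range

lemma continuous_snd : Continuous u.snd := by
  refine (AddMonoidHomClass.isometry_of_norm u.ι u.ι_norm).comp_continuous_iff.mp ?_
  have h : ⇑u.ι ∘ ⇑u.snd = fun y => y - algebraMap ℂ A' (u.fst y) := by
    ext y
    rw [Function.comp_apply, eq_sub_iff_add_eq', u.algebraMap_fst_add_ι_snd]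
  rw [h]
  exact continuous_id.sub ((algebraMapCLM ℂ A').continuous.comp u.continuous_fst)

noncomputable def fstCLM : A' →L[ℂ] ℂ := ⟨u.fst, u.continuous_fst⟩

noncomputable def sndCLM : A' →L[ℂ] A := ⟨u.snd, u.continuous_snd⟩

@[simp]
lemma fstCLM_apply (y : A') : u.fstCLM y = u.fst y := rfl

@[simp]
lemma sndCLM_apply (y : A') : u.sndCLM y = u.snd y := rfl

noncomputable def character : characterSpace ℂ A' :=
  ⟨u.fstCLM, fun h => one_ne_zero (u.fst_one.symm.trans (DFunLike.congr_fun h 1)), u.fst_mul⟩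

end IsUnitization

namespace BBimod

variable {A X : Type*} [NonUnitalNormedRing A] [NormedSpace ℂ A]
    [NormedAddCommGroup X] [NormedSpace ℂ X]

@[simp]
lemma dual_l_apply (M : BBimod A X) (a : A) (f : X →L[ℂ] ℂ) (x : X) :
    M.dual.l a f x = f (M.r a x) := rfl

@[simp]
lemma dual_r_apply (M : BBimod A X) (a : A) (f : X →L[ℂ] ℂ) (x : X) :
    M.dual.r a f x = f (M.l a x) := rfl

lemma isApproxInner_dual_of_forall_exists {B : Type*} [NonUnitalNormedRing B] [NormedSpace ℂ B]
    {N : BBimod B X} {D' : B →L[ℂ] X →L[ℂ] ℂ} {M : BBimod A X} {D : A →L[ℂ] X →L[ℂ] ℂ}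
    (h : N.dual.IsApproxInner D')
    (hMN : ∀ a, ∃ b, N.l b = M.l a ∧ N.r b = M.r a ∧ D' b = D a) :
    M.dual.IsApproxInner D := by
  obtain ⟨ι, lf, f, hne, hf⟩ := h
  refine ⟨ι, lf, f, hne, fun a => ?_⟩
  obtain ⟨b, hl, hr, hD⟩ := hMN a
  simpa only [dual, coe_comp, Function.comp_apply, hl, hr, hD] using hf b

section Unitization

variable {A' : Type*} [NormedRing A'] [NormedAlgebra ℂ A'] [CompleteSpace A]
    (M : BBimod A X) (u : IsUnitization A A')

noncomputable def unitization : BBimod A' X where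
  l := u.fstCLM.smulRight (ContinuousLinearMap.id ℂ X) + M.l.comp u.sndCLM
  r := u.fstCLM.smulRight (ContinuousLinearMap.id ℂ X) + M.r.comp u.sndCLM
  l_mul y y' x := by
    simp only [add_apply, smulRight_apply, comp_apply, u.fstCLM_apply, u.sndCLM_apply,
      u.fst_mul, u.snd_mul, map_add, map_smul, M.l_mul, id_apply, smul_apply]
    module
  r_mul y y' x := by
    simp only [add_apply, smulRight_apply, comp_apply, u.fstCLM_apply, u.sndCLM_apply,
      u.fst_mul, u.snd_mul, map_add, map_smul, M.r_mul, id_apply, smul_apply]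
    module
  lr y y' x := by
    simp only [add_apply, smulRight_apply, comp_apply, u.fstCLM_apply, u.sndCLM_apply,
      map_add, map_smul, M.lr, id_apply, smul_apply]
    module

lemma unitization_l_apply (y : A') (x : X) :
    (M.unitization u).l y x = u.fst y • x + M.l (u.snd y) x := rfl

lemma unitization_r_apply (y : A') (x : X) :
    (M.unitization u).r y x = u.fst y • x + M.r (u.snd y) x := rfl

lemma unitization_l_ι (a : A) : (M.unitization u).l (u.ι a) = M.l a := by
  ext x
  simp [unitization_l_apply, u.fst_ι, u.snd_ι]

lemma unitization_r_ι (a : A) : (M.unitization u).r (u.ι a) = M.r a := by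
  ext x
  simp [unitization_r_apply, u.fst_ι, u.snd_ι]

lemma IsDeriv.unitization {D : A →L[ℂ] X →L[ℂ] ℂ} (hD : M.dual.IsDeriv D) :
    (M.unitization u).dual.IsDeriv (D.comp u.sndCLM) := by
  intro y y'
  ext x
  simp only [coe_comp, Function.comp_apply, u.sndCLM_apply, u.snd_mul, map_add, map_smul,
    hD (u.snd y) (u.snd y'), add_apply, smul_apply, dual_l_apply, dual_r_apply,
    unitization_l_apply, unitization_r_apply, smul_eq_mul]
  ring

end Unitization

end BBimod

lemma IsUnitization.approxAmenable {A A' : Type*} [NonUnitalNormedRing A] [NormedSpace ℂ A]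
    [CompleteSpace A] [NormedRing A'] [NormedAlgebra ℂ A'] (u : IsUnitization A A')
    (h : ApproxAmenable A') : ApproxAmenable A := by
  intro X _ _ _ M D hD
  refine BBimod.isApproxInner_dual_of_forall_exists
    (h X (M.unitization u) _ (hD.unitization M u)) fun a => ?_
  exact ⟨u.ι a, M.unitization_l_ι u a, M.unitization_r_ι u a, by simp [u.snd_ι]⟩

namespace ProjTensor

variable {A B C : Type*} [NonUnitalNormedRing A] [NormedSpace ℂ A]
    [NonUnitalNormedRing B] [NormedSpace ℂ B] [NonUnitalNormedRing C] [NormedSpace ℂ C]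
    (t : ProjTensor A B C)

-- The multiplication of `C` is not assumed `ℂ`-bilinear, so identities are propagated from
-- elementary tensors by additivity and continuity alone: as `z • tp a b = tp (z • a) b`, the
-- additive closure of the elementary tensors is already their linear span.
lemma induction_on {P : C → Prop} (hP : IsClosed {c | P c})
    (hadd : ∀ c c', P c → P c' → P (c + c')) (htp : ∀ a b, P (t.tp a b)) (c : C) : P c := by
  refine t.dense_span.induction (fun x hx => ?_) hP c
  induction hx using Submodule.closure_induction with
  | zero => simpa using htp 0 0
  | add x y _ _ hx hy => exact hadd x y hx hy
  | smul_mem z _ h =>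
    obtain ⟨⟨a, b⟩, rfl⟩ := h
    simpa using htp (z • a) b

lemma induction_on₂ {P : C → C → Prop} (hP₁ : ∀ c', IsClosed {c | P c c'})
    (hP₂ : ∀ c, IsClosed {c' | P c c'})
    (hadd₁ : ∀ c₁ c₂ c', P c₁ c' → P c₂ c' → P (c₁ + c₂) c')
    (hadd₂ : ∀ c c₁ c₂, P c c₁ → P c c₂ → P c (c₁ + c₂))
    (htp : ∀ a b a' b', P (t.tp a b) (t.tp a' b')) (c c' : C) : P c c' :=
  t.induction_on (hP₁ c') (fun _ _ h₁ h₂ => hadd₁ _ _ _ h₁ h₂)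
    (fun a b => t.induction_on (hP₂ _) (hadd₂ _) (htp a b) c') c

noncomputable def liftSMulRight (φ : A →L[ℂ] ℂ) {E : Type} [NormedAddCommGroup E]
    [NormedSpace ℂ E] [CompleteSpace E] (F : B →L[ℂ] E) : C →L[ℂ] E :=
  (t.lift E (φ.smulRight F)).choose

@[simp]
lemma liftSMulRight_tp (φ : A →L[ℂ] ℂ) {E : Type} [NormedAddCommGroup E]
    [NormedSpace ℂ E] [CompleteSpace E] (F : B →L[ℂ] E) (a : A) (b : B) :
    t.liftSMulRight φ F (t.tp a b) = φ a • F b :=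
  (t.lift E (φ.smulRight F)).choose_spec.2 a b

section Character

variable (φ : characterSpace ℂ A) {E : Type} [NormedRing E] [NormedAlgebra ℂ E]
    [CompleteSpace E] {F G : B →L[ℂ] E}

lemma liftSMulRight_mul (hF : ∀ b b', F (b * b') = F b * F b') (c c' : C) :
    t.liftSMulRight (CharacterSpace.toCLM φ) F (c * c')
      = t.liftSMulRight (CharacterSpace.toCLM φ) F c
        * t.liftSMulRight (CharacterSpace.toCLM φ) F c' := by
  revert c c'
  refine t.induction_on₂ ?_ ?_ ?_ ?_ ?_
  · exact fun c' => isClosed_eq (by fun_prop) (by fun_prop)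
  · exact fun c => isClosed_eq (by fun_prop) (by fun_prop)
  · intro _ _ _ h₁ h₂
    simp only [add_mul, map_add, h₁, h₂]
  · intro _ _ _ h₁ h₂
    simp only [mul_add, map_add, h₁, h₂]
  · intro a b a' b'
    simp [← t.mk_mul, hF, map_mul, smul_smul, mul_comm]

lemma liftSMulRight_mul_rev (hF : ∀ b b', F (b * b') = F b' * F b) (c c' : C) :
    t.liftSMulRight (CharacterSpace.toCLM φ) F (c * c')
      = t.liftSMulRight (CharacterSpace.toCLM φ) F c'
        * t.liftSMulRight (CharacterSpace.toCLM φ) F c := by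
  revert c c'
  refine t.induction_on₂ ?_ ?_ ?_ ?_ ?_
  · exact fun c' => isClosed_eq (by fun_prop) (by fun_prop)
  · exact fun c => isClosed_eq (by fun_prop) (by fun_prop)
  · intro _ _ _ h₁ h₂
    simp only [add_mul, mul_add, map_add, h₁, h₂]
  · intro _ _ _ h₁ h₂
    simp only [add_mul, mul_add, map_add, h₁, h₂]
  · intro a b a' b'
    simp [← t.mk_mul, hF, map_mul, smul_smul]

lemma liftSMulRight_commute (hFG : ∀ b b', Commute (F b) (G b')) (c c' : C) :
    Commute (t.liftSMulRight (CharacterSpace.toCLM φ) F c)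
      (t.liftSMulRight (CharacterSpace.toCLM φ) G c') := by
  revert c c'
  refine t.induction_on₂ ?_ ?_ ?_ ?_ ?_
  · exact fun c' => isClosed_eq (by fun_prop) (by fun_prop)
  · exact fun c => isClosed_eq (by fun_prop) (by fun_prop)
  · intro _ _ _ h₁ h₂
    simpa only [map_add] using h₁.add_left h₂
  · intro _ _ _ h₁ h₂
    simpa only [map_add] using h₁.add_right h₂
  · intro a b a' b'
    simpa using ((hFG b b').smul_left _).smul_right _

variable {X : Type} [NormedAddCommGroup X] [NormedSpace ℂ X] [CompleteSpace X] (M : BBimod B X)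

-- `X` as a `C`-bimodule through `a ⊗ b ↦ φ a • b`. `ProjTensor.lift` only reaches spaces in
-- `Type`, so that map `C → B` is not formed: the actions on `X` are lifted directly.
noncomputable def bimodOfCharacter : BBimod C X where
  l := t.liftSMulRight (CharacterSpace.toCLM φ) M.l
  r := t.liftSMulRight (CharacterSpace.toCLM φ) M.r
  l_mul c c' x := by
    rw [t.liftSMulRight_mul φ (fun b b' => ext (M.l_mul b b'))]
    rfl
  r_mul c c' x := by
    rw [t.liftSMulRight_mul_rev φ (fun b b' => ext (M.r_mul b b'))]
    rfl
  lr c c' x :=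
    DFunLike.congr_fun (t.liftSMulRight_commute φ (F := M.l) (G := M.r)
      (fun b b' => ext (M.lr b b')) c c') x

lemma bimodOfCharacter_l_tp (a : A) (b : B) :
    (t.bimodOfCharacter φ M).l (t.tp a b) = φ a • M.l b :=
  t.liftSMulRight_tp _ _ a b

lemma bimodOfCharacter_r_tp (a : A) (b : B) :
    (t.bimodOfCharacter φ M).r (t.tp a b) = φ a • M.r b :=
  t.liftSMulRight_tp _ _ a b

lemma isDeriv_liftSMulRight {D : B →L[ℂ] X →L[ℂ] ℂ} (hD : M.dual.IsDeriv D) :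
    (t.bimodOfCharacter φ M).dual.IsDeriv (t.liftSMulRight (CharacterSpace.toCLM φ) D) := by
  unfold BBimod.IsDeriv
  refine t.induction_on₂ ?_ ?_ ?_ ?_ ?_
  · exact fun c' => isClosed_eq (by fun_prop) (by fun_prop)
  · exact fun c => isClosed_eq (by fun_prop) (by fun_prop)
  · intro _ _ _ h₁ h₂
    simp only [add_mul, map_add, h₁, h₂, add_apply]
    abel
  · intro _ _ _ h₁ h₂
    simp only [mul_add, map_add, h₁, h₂, add_apply]
    abel
  · intro a b a' b'
    ext x
    simp [← t.mk_mul, hD b b', bimodOfCharacter_l_tp, bimodOfCharacter_r_tp, map_mul]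
    ring

end Character

lemma approxAmenable_right_of_character (t : ProjTensor A B C) (φ : characterSpace ℂ A)
    (h : ApproxAmenable C) : ApproxAmenable B := by
  obtain ⟨e, he⟩ := CharacterSpace.exists_apply_eq_one φ
  intro X _ _ _ M D hD
  refine BBimod.isApproxInner_dual_of_forall_exists
    (h X (t.bimodOfCharacter φ M) _ (t.isDeriv_liftSMulRight φ M hD)) fun b => ⟨t.tp e b, ?_⟩
  simp [bimodOfCharacter_l_tp, bimodOfCharacter_r_tp, he]

end ProjTensor

theorem approxAmenable_right_of_unitization_tensor_general
    {A B A' B' C : Type*}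
    [NonUnitalNormedRing A] [NormedSpace ℂ A] [CompleteSpace A]
    [NonUnitalNormedRing B] [NormedSpace ℂ B] [CompleteSpace B]
    [NormedRing A'] [NormedAlgebra ℂ A']
    [NormedRing B'] [NormedAlgebra ℂ B']
    [NonUnitalNormedRing C] [NormedSpace ℂ C]
    (uA : IsUnitization A A') (uB : IsUnitization B B')
    (t : ProjTensor A' B' C)
    (h : ApproxAmenable C) : ApproxAmenable B :=
  uB.approxAmenable (t.approxAmenable_right_of_character uA.character h)

/-- if `A# ⊗̂ B#` is approximately amenable, then so is `B`. -/
theorem approxAmenable_right_of_unitization_tensor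
    {A B A' B' C : Type*}
    [NonUnitalNormedRing A] [NormedSpace ℂ A] [CompleteSpace A]
    [NonUnitalNormedRing B] [NormedSpace ℂ B] [CompleteSpace B]
    [NormedRing A'] [NormedAlgebra ℂ A'] [CompleteSpace A']
    [NormedRing B'] [NormedAlgebra ℂ B'] [CompleteSpace B']
    [NonUnitalNormedRing C] [NormedSpace ℂ C] [CompleteSpace C]
    (uA : IsUnitization A A') (uB : IsUnitization B B')
    (t : ProjTensor A' B' C)
    (h : ApproxAmenable C) : ApproxAmenable B :=
  approxAmenable_right_of_unitization_tensor_general uA uB t h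
end

section
/- The Banach algebra ℓ² with pointwise multiplication is approximately semi-amenable: every continuous derivation D from ℓ² into any Banach ℓ²-bimodule X is approximately semi-inner, i.e. there exist nets (m_i), (n_i) in X with D(a) = lim_i (a·m_i − n_i·a) for all a ∈ ℓ². -/
open Filter Topology MeasureTheory

/-! A derivation `D` on `ℓ²` is determined by its values on the orthogonal idempotents `δₖ`,
and `D δₖ = δₖ • D δₖ + D δₖ • δₖ` splits into a left and a right part. Summing the left parts
into `m` and minus the right parts into `n` over finite sets `s` of coordinates gives
`a • m - n • a = D (∑_{k ∈ s} aₖ δₖ)`, which tends to `D a` because `∑ₖ aₖ δₖ` is the expansion of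
`a` in the standard basis. -/

namespace BBimod

variable {A X : Type*} [NonUnitalNormedRing A] [NormedSpace ℂ A]
    [NormedAddCommGroup X] [NormedSpace ℂ X] {M : BBimod A X} {D : A →L[ℂ] X}

theorem IsDeriv.left_left_add_right_right_of_mul_eq_smul (hD : M.IsDeriv D) {p a : A} {c : ℂ}
    (hp : p * p = p) (hap : a * p = c • p) (hpa : p * a = c • p) :
    M.l a (M.l p (D p)) + M.r a (M.r p (D p)) = D (c • p) := by
  have hsplit : D p = M.l p (D p) + M.r p (D p) := by simpa only [hp] using hD p p
  rw [← M.l_mul, ← M.r_mul, hap, hpa, map_smul, map_smul, smul_apply, smul_apply, ← smul_add,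
    ← hsplit, map_smul]

theorem IsDeriv.isApproxSemiInner_of_hasSum {κ : Type} (hD : M.IsDeriv D) (p : κ → A)
    (c : κ → A → ℂ) (hp : ∀ k, p k * p k = p k) (hmul_left : ∀ a k, a * p k = c k a • p k)
    (hmul_right : ∀ a k, p k * a = c k a • p k) (hsum : ∀ a, HasSum (fun k => c k a • p k) a) :
    M.IsApproxSemiInner D := by
  refine ⟨Finset κ, atTop, fun s => ∑ k ∈ s, M.l (p k) (D (p k)),
    fun s => -∑ k ∈ s, M.r (p k) (D (p k)), inferInstance, fun a => ?_⟩
  have partial_sums : ∀ s : Finset κ, M.l a (∑ k ∈ s, M.l (p k) (D (p k)))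
      - M.r a (-∑ k ∈ s, M.r (p k) (D (p k))) = D (∑ k ∈ s, c k a • p k) := by
    intro s
    simp only [map_sum, map_neg, sub_neg_eq_add, ← Finset.sum_add_distrib]
    exact Finset.sum_congr rfl fun k _ =>
      hD.left_left_add_right_right_of_mul_eq_smul (hp k) (hmul_left a k) (hmul_right a k)
  exact ((D.continuous.tendsto a).comp (hsum a)).congr fun s => (partial_sums s).symm

end BBimod

section L2

variable {A : Type*} [NonUnitalNormedRing A] [NormedSpace ℂ A]
    {e : A ≃ₗᵢ[ℂ] lp (fun _ : ℕ => ℂ) 2}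

theorem hasSum_smul_symm_single (a : A) :
    HasSum (fun k => (e a : ∀ _ : ℕ, ℂ) k • e.symm (lp.single 2 k 1)) a := by
  have hsum := (lp.hasSum_single (by norm_num) (e a)).map e.symm.toContinuousLinearEquiv
    e.symm.continuous
  simp only [LinearIsometryEquiv.coe_toContinuousLinearEquiv,
    LinearIsometryEquiv.symm_apply_apply] at hsum
  convert hsum using 2 with k
  rw [Function.comp_apply, ← e.symm.map_smul, ← lp.single_smul, smul_eq_mul, mul_one]

theorem mul_comm_of_pointwise (hmul : ∀ (f g : A) (k : ℕ),
    (e (f * g) : ∀ _ : ℕ, ℂ) k = (e f : ∀ _ : ℕ, ℂ) k * (e g : ∀ _ : ℕ, ℂ) k)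
    (f g : A) : f * g = g * f :=
  e.injective <| lp.ext <| funext fun k => by rw [hmul, hmul, mul_comm]

theorem mul_symm_single (hmul : ∀ (f g : A) (k : ℕ),
    (e (f * g) : ∀ _ : ℕ, ℂ) k = (e f : ∀ _ : ℕ, ℂ) k * (e g : ∀ _ : ℕ, ℂ) k)
    (a : A) (k : ℕ) :
    a * e.symm (lp.single 2 k 1) = (e a : ∀ _ : ℕ, ℂ) k • e.symm (lp.single 2 k 1) := by
  refine e.injective <| lp.ext <| funext fun j => ?_
  rw [hmul, e.map_smul, LinearIsometryEquiv.apply_symm_apply, lp.coeFn_smul, Pi.smul_apply,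
    smul_eq_mul, lp.single_apply]
  rcases eq_or_ne j k with rfl | hjk <;> simp [*]

theorem symm_single_mul (hmul : ∀ (f g : A) (k : ℕ),
    (e (f * g) : ∀ _ : ℕ, ℂ) k = (e f : ∀ _ : ℕ, ℂ) k * (e g : ∀ _ : ℕ, ℂ) k)
    (a : A) (k : ℕ) :
    e.symm (lp.single 2 k 1) * a = (e a : ∀ _ : ℕ, ℂ) k • e.symm (lp.single 2 k 1) := by
  rw [mul_comm_of_pointwise hmul, mul_symm_single hmul]

theorem symm_single_mul_self (hmul : ∀ (f g : A) (k : ℕ),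
    (e (f * g) : ∀ _ : ℕ, ℂ) k = (e f : ∀ _ : ℕ, ℂ) k * (e g : ∀ _ : ℕ, ℂ) k)
    (k : ℕ) : e.symm (lp.single 2 k 1) * e.symm (lp.single 2 k 1) = e.symm (lp.single 2 k 1) := by
  rw [mul_symm_single hmul, LinearIsometryEquiv.apply_symm_apply, lp.single_apply_self, one_smul]

end L2

theorem l2_approximately_semi_amenable_general
    {A : Type*} [NonUnitalNormedRing A] [NormedSpace ℂ A]
    (e : A ≃ₗᵢ[ℂ] lp (fun _ : ℕ => ℂ) 2)
    (hmul : ∀ (f g : A) (k : ℕ), (e (f * g) : ∀ _ : ℕ, ℂ) k = (e f : ∀ _ : ℕ, ℂ) k * (e g : ∀ _ : ℕ, ℂ) k) :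
    ∀ (X : Type) [NormedAddCommGroup X] [NormedSpace ℂ X] [CompleteSpace X]
      (M : BBimod A X) (D : A →L[ℂ] X), M.IsDeriv D → M.IsApproxSemiInner D :=
  fun _ _ _ _ _ _ hD => hD.isApproxSemiInner_of_hasSum _ _ (symm_single_mul_self hmul)
    (mul_symm_single hmul) (symm_single_mul hmul) hasSum_smul_symm_single

/-- `ℓ²` with pointwise multiplication is approximately semi-amenable:
every continuous derivation from `ℓ²` into any Banach `ℓ²`-bimodule is approximately
semi-inner.  The Banach algebra `A` is identified with `ℓ²` via a linear isometry
carrying the product to pointwise multiplication. -/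
theorem l2_approximately_semi_amenable
    {A : Type*} [NonUnitalNormedRing A] [NormedSpace ℂ A] [CompleteSpace A]
    (e : A ≃ₗᵢ[ℂ] lp (fun _ : ℕ => ℂ) 2)
    (hmul : ∀ (f g : A) (k : ℕ), (e (f * g) : ∀ _ : ℕ, ℂ) k = (e f : ∀ _ : ℕ, ℂ) k * (e g : ∀ _ : ℕ, ℂ) k) :
    ∀ (X : Type) [NormedAddCommGroup X] [NormedSpace ℂ X] [CompleteSpace X]
      (M : BBimod A X) (D : A →L[ℂ] X), M.IsDeriv D → M.IsApproxSemiInner D :=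
  l2_approximately_semi_amenable_general e hmul
end
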